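/- arXiv:1108.1171 — 2 statements merged into one kernel-verified Lean document; each statement's English description precedes it below -/
import Mathlib

section
/- (Wolstenholme) For any prime p ≥ 5, the harmonic number H_{p-1} = ∑_{k=1}^{p-1} 1/k is congruent to 0 modulo p^2, i.e., the rational number H_{p-1} has p-adic valuation at least 2. -/
/-!
Write `H_{p-1} = T / (p-1)!` with `T = ∑ (p-1)!/k`. Pairing `k` with `p - k` gives
`2T = p ∑ (p-1)!/(k(p-k))`, and modulo `p` each term of the last sum is `-(p-1)! k⁻²`; these
cancel because `k ↦ k⁻¹` permutes `𝔽_p` and `∑_{x ∈ 𝔽_p} x² = 0` for `p > 3`. Hence `p² ∣ T`,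
while `p ∤ (p-1)!`.
-/

open Finset

def harmonicNum (n : ℕ) : ℚ := ∑ k ∈ Finset.Icc 1 n, (1 / (k : ℚ))

/-- `x ≡ 0 (mod p^m)` for a rational `x`: `x` is `p`-integral and `p^m` divides its numerator. -/
def CongrZeroMod (p m : ℕ) (x : ℚ) : Prop := (p : ℤ) ^ m ∣ x.num ∧ ¬ (p ∣ x.den)

open Nat

theorem congrZeroMod_intCast_div {p m : ℕ} (hp : p.Prime) {a b : ℤ} (ha : (p : ℤ) ^ m ∣ a)
    (hb : ¬ (p : ℤ) ∣ b) : CongrZeroMod p m (a / b) := by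
  have hb0 : b ≠ 0 := by rintro rfl; exact hb (dvd_zero _)
  set x : ℚ := a / b
  have hden : (x.den : ℤ) ∣ b := by
    simpa only [x, Rat.divInt_eq_div] using Rat.den_dvd a b
  have hcross : x.num * b = a * x.den := by
    have h : ((x.num * b : ℤ) : ℚ) = a * x.den := by
      push_cast
      rw [← Rat.mul_den_eq_num x]
      field_simp
      exact div_mul_cancel₀ _ (by exact_mod_cast hb0)
    exact_mod_cast h
  refine ⟨?_, fun h => hb ((Int.natCast_dvd_natCast.mpr h).trans hden)⟩
  have hcop : IsCoprime ((p : ℤ) ^ m) b :=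
    ((Nat.prime_iff_prime_int.mp hp).coprime_iff_not_dvd.mpr hb).pow_left
  exact hcop.dvd_of_dvd_mul_right (hcross ▸ ha.mul_right _)

theorem harmonicNum_eq_sum_factorial_div (n : ℕ) :
    harmonicNum n = ((∑ k ∈ Icc 1 n, n ! / k : ℕ) : ℚ) / n ! := by
  rw [harmonicNum, Nat.cast_sum, sum_div]
  refine sum_congr rfl fun k hk => ?_
  obtain ⟨hk1, hkn⟩ := mem_Icc.mp hk
  rw [Nat.cast_div (Nat.dvd_factorial hk1 hkn) (by positivity)]
  field_simp [n.factorial_pos.ne']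

theorem mul_dvd_factorial {a b n : ℕ} (hab : a ≠ b) (ha : a ∈ Icc 1 n) (hb : b ∈ Icc 1 n) :
    a * b ∣ n ! :=
  calc a * b = ∏ i ∈ {a, b}, i := (prod_pair (f := fun i => i) hab).symm
    _ ∣ ∏ i ∈ Icc 1 n, i := prod_dvd_prod_of_subset _ _ _ (insert_subset ha (by simpa using hb))
    _ = n ! := by rw [← Ico_add_one_right_eq_Icc, prod_Ico_id_eq_factorial]

theorem factorial_div_add_factorial_div {a b n : ℕ} (hab : a ≠ b) (ha : a ∈ Icc 1 n)
    (hb : b ∈ Icc 1 n) : n ! / a + n ! / b = (a + b) * (n ! / (a * b)) := by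
  obtain ⟨q, hq⟩ := mul_dvd_factorial hab ha hb
  have ha0 : 0 < a := (mem_Icc.mp ha).1
  have hb0 : 0 < b := (mem_Icc.mp hb).1
  rw [Nat.div_eq_of_eq_mul_left ha0 (by rw [hq]; ring : n ! = b * q * a),
    Nat.div_eq_of_eq_mul_left hb0 (by rw [hq]; ring : n ! = a * q * b),
    Nat.div_eq_of_eq_mul_left (by positivity) (by rw [hq]; ring : n ! = q * (a * b))]
  ring

theorem sub_mem_Icc_one_sub_one {n k : ℕ} (hk : k ∈ Icc 1 (n - 1)) : n - k ∈ Icc 1 (n - 1) := by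
  simp only [mem_Icc] at hk ⊢
  omega

theorem ne_sub_of_odd {n : ℕ} (hn : Odd n) (k : ℕ) : k ≠ n - k := by
  obtain ⟨m, rfl⟩ := hn
  omega

theorem sum_Icc_sub_reflect {M : Type*} [AddCommMonoid M] (f : ℕ → M) (n : ℕ) :
    ∑ k ∈ Icc 1 (n - 1), f (n - k) = ∑ k ∈ Icc 1 (n - 1), f k :=
  sum_nbij' (n - ·) (n - ·) (fun _ => sub_mem_Icc_one_sub_one) (fun _ => sub_mem_Icc_one_sub_one)
    (fun _ hk => Nat.sub_sub_self (by simp only [mem_Icc] at hk; omega))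
    (fun _ hk => Nat.sub_sub_self (by simp only [mem_Icc] at hk; omega)) fun _ _ => rfl

theorem factorial_div_add_factorial_div_sub {n k : ℕ} (hn : Odd n) (hk : k ∈ Icc 1 (n - 1)) :
    (n - 1)! / k + (n - 1)! / (n - k) = n * ((n - 1)! / (k * (n - k))) := by
  rw [factorial_div_add_factorial_div (ne_sub_of_odd hn k) hk (sub_mem_Icc_one_sub_one hk),
    Nat.add_sub_cancel' (by simp only [mem_Icc] at hk; omega)]

namespace ZMod

theorem natCast_ne_zero_of_mem_Icc {n k : ℕ} (hk : k ∈ Icc 1 (n - 1)) : (k : ZMod n) ≠ 0 := by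
  simp only [mem_Icc] at hk
  rw [Ne, ZMod.natCast_eq_zero_iff]
  exact Nat.not_dvd_of_pos_of_lt (by omega) (by omega)

theorem sum_Icc_natCast_eq_sum_univ {n : ℕ} [NeZero n] {M : Type*} [AddCommMonoid M]
    (f : ZMod n → M) (hf : f 0 = 0) : ∑ k ∈ Icc 1 (n - 1), f k = ∑ x, f x := by
  rw [← sum_erase univ hf]
  refine sum_nbij' (fun k => (k : ZMod n)) ZMod.val ?_ ?_ ?_ ?_ fun _ _ => rfl
  · intro k hk
    simpa only [mem_erase, mem_univ, and_true] using natCast_ne_zero_of_mem_Icc hk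
  · intro x hx
    have hlt := ZMod.val_lt x
    have hne : x.val ≠ 0 := by simpa using hx
    simp only [mem_Icc]
    omega
  · intro k hk
    exact ZMod.val_natCast_of_lt (by simp only [mem_Icc] at hk; omega)
  · intro x _
    exact ZMod.natCast_zmod_val x

theorem sum_Icc_inv_sq_eq_zero {p : ℕ} [Fact p.Prime] (hp : 3 < p) :
    ∑ k ∈ Icc 1 (p - 1), ((k : ZMod p)⁻¹) ^ 2 = 0 := by
  rw [sum_Icc_natCast_eq_sum_univ (fun x => x⁻¹ ^ 2) (by simp)]
  refine (Equiv.sum_comp (Equiv.inv (ZMod p)) (· ^ 2)).trans ?_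
  exact FiniteField.sum_pow_lt_card_sub_one _ _ (by rw [ZMod.card]; omega)

theorem natCast_div_mul_sub_eq_neg_mul_inv_sq {p : ℕ} [Fact p.Prime] {N k : ℕ}
    (hk : k ∈ Icc 1 (p - 1)) (hdvd : k * (p - k) ∣ N) :
    ((N / (k * (p - k)) : ℕ) : ZMod p) = -N * ((k : ZMod p)⁻¹) ^ 2 := by
  have hk0 := natCast_ne_zero_of_mem_Icc hk
  have h := congrArg (Nat.cast : ℕ → ZMod p) (Nat.div_mul_cancel hdvd)
  rw [Nat.cast_mul, Nat.cast_mul, Nat.cast_sub (by simp only [mem_Icc] at hk; omega),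
    ZMod.natCast_self] at h
  rw [← h]
  field_simp
  ring

end ZMod

theorem prime_dvd_sum_factorial_div_mul_sub {p : ℕ} (hp : p.Prime) (hp3 : 3 < p) :
    p ∣ ∑ k ∈ Icc 1 (p - 1), (p - 1)! / (k * (p - k)) := by
  have : Fact p.Prime := ⟨hp⟩
  have hodd : Odd p := hp.odd_of_ne_two (by omega)
  have hdvd : ∀ k ∈ Icc 1 (p - 1), k * (p - k) ∣ (p - 1)! := fun k hk =>
    mul_dvd_factorial (ne_sub_of_odd hodd k) hk (sub_mem_Icc_one_sub_one hk)
  rw [← ZMod.natCast_eq_zero_iff, Nat.cast_sum,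
    sum_congr rfl fun k hk => ZMod.natCast_div_mul_sub_eq_neg_mul_inv_sq hk (hdvd k hk),
    ← mul_sum, ZMod.sum_Icc_inv_sq_eq_zero (by omega), mul_zero]

theorem sq_dvd_sum_factorial_div {p : ℕ} (hp : p.Prime) (hp3 : 3 < p) :
    p ^ 2 ∣ ∑ k ∈ Icc 1 (p - 1), (p - 1)! / k := by
  have hodd : Odd p := hp.odd_of_ne_two (by omega)
  have htwice : 2 * ∑ k ∈ Icc 1 (p - 1), (p - 1)! / k =
      p * ∑ k ∈ Icc 1 (p - 1), (p - 1)! / (k * (p - k)) := by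
    rw [two_mul]
    nth_rewrite 2 [← sum_Icc_sub_reflect]
    rw [← sum_add_distrib, mul_sum]
    exact sum_congr rfl fun k hk => factorial_div_add_factorial_div_sub hodd hk
  have hcop : Nat.Coprime (p ^ 2) 2 :=
    ((Nat.coprime_primes hp Nat.prime_two).mpr (by omega)).pow_left _
  refine hcop.dvd_of_dvd_mul_left ?_
  rw [htwice, pow_two]
  exact Nat.mul_dvd_mul_left p (prime_dvd_sum_factorial_div_mul_sub hp hp3)

theorem wolstenholme (p : ℕ) (hp : p.Prime) (hp5 : 5 ≤ p) :
    CongrZeroMod p 2 (harmonicNum (p - 1)) := by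
  rw [harmonicNum_eq_sum_factorial_div]
  have hnum := Int.natCast_dvd_natCast.mpr (sq_dvd_sum_factorial_div hp (by omega))
  rw [Nat.cast_pow] at hnum
  have hden : ¬ p ∣ (p - 1)! := by rw [hp.dvd_factorial]; omega
  have key := congrZeroMod_intCast_div hp hnum (Int.natCast_dvd_natCast.not.mpr hden)
  rwa [Int.cast_natCast, Int.cast_natCast] at key
end

section
/- For any prime p ≥ 7, 4·∑_{k=1}^{p-1} H_k^3/k - 6·∑_{k=1}^{p-1} H_k^2/k^2 + 4·∑_{k=1}^{p-1} H_{k-1}/k^3 + 3·∑_{k=1}^{p-1} 1/k^4 ≡ 0 modulo p^2, as p-integral rational numbers. -/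
/-!
Since `H_k = H_{k-1} + 1/k`, the summand `4 H_k^3/k - 6 H_k^2/k^2 + 4 H_{k-1}/k^3 + 3/k^4`
is exactly `H_k^4 - H_{k-1}^4`, so the combination telescopes to `H_{p-1}^4`. The denominator
of `H_{p-1}` divides `(p-1)!`, and its numerator is divisible by `p` because
`(p-1)! H_{p-1} ≡ (p-1)! ∑ k⁻¹ (mod p)` and inversion permutes the units of `ZMod p`, whose sum
vanishes for `p` odd. Hence `p^4` divides the numerator of `H_{p-1}^4`.
-/

open Finset

open scoped Nat

lemma harmonicNum_succ (n : ℕ) : harmonicNum (n + 1) = harmonicNum n + 1 / ((n : ℚ) + 1) := by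
  rw [harmonicNum, sum_Icc_succ_top (by omega)]
  push_cast
  rfl

lemma harmonicNum_pow_four_eq (n : ℕ) :
    harmonicNum n ^ 4 =
      4 * (∑ k ∈ Icc 1 n, harmonicNum k ^ 3 / (k : ℚ))
        - 6 * (∑ k ∈ Icc 1 n, harmonicNum k ^ 2 / (k : ℚ) ^ 2)
        + 4 * (∑ k ∈ Icc 1 n, harmonicNum (k - 1) / (k : ℚ) ^ 3)
        + 3 * (∑ k ∈ Icc 1 n, 1 / (k : ℚ) ^ 4) := by
  induction n with
  | zero => simp [harmonicNum]
  | succ n ih =>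
    simp only [sum_Icc_succ_top (show 1 ≤ n + 1 by omega), Nat.add_sub_cancel, harmonicNum_succ]
    have hn : (n : ℚ) + 1 ≠ 0 := by positivity
    have step : ∀ x : ℚ, (x + 1 / ((n : ℚ) + 1)) ^ 4 - x ^ 4 =
        4 * ((x + 1 / ((n : ℚ) + 1)) ^ 3 / ((n : ℚ) + 1))
          - 6 * ((x + 1 / ((n : ℚ) + 1)) ^ 2 / ((n : ℚ) + 1) ^ 2)
          + 4 * (x / ((n : ℚ) + 1) ^ 3) + 3 * (1 / ((n : ℚ) + 1) ^ 4) := by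
      intro x; field_simp; ring
    push_cast
    linear_combination ih + step (harmonicNum n)

lemma natCast_sum_factorial_div {K : Type*} [Field K] (n : ℕ)
    (h : ∀ k ∈ Icc 1 n, (k : K) ≠ 0) :
    ((∑ k ∈ Icc 1 n, n ! / k : ℕ) : K) = n ! * ∑ k ∈ Icc 1 n, (k : K)⁻¹ := by
  rw [Nat.cast_sum, mul_sum]
  refine sum_congr rfl fun k hk ↦ ?_
  rw [Nat.cast_div (Nat.dvd_factorial (mem_Icc.1 hk).1 (mem_Icc.1 hk).2) (h k hk), div_eq_mul_inv]

lemma harmonicNum_eq_div_factorial (n : ℕ) :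
    harmonicNum n = (((∑ k ∈ Icc 1 n, n ! / k : ℕ) : ℤ) : ℚ) / ((n ! : ℤ) : ℚ) := by
  have hk : ∀ k ∈ Icc 1 n, (k : ℚ) ≠ 0 := fun k hk ↦
    Nat.cast_ne_zero.2 (Nat.one_le_iff_ne_zero.1 (mem_Icc.1 hk).1)
  rw [Int.cast_natCast, Int.cast_natCast, natCast_sum_factorial_div n hk, harmonicNum]
  simp [Nat.factorial_ne_zero]

lemma ZMod.sum_range_natCast_eq_sum_univ {M : Type*} [AddCommMonoid M] (n : ℕ) [NeZero n]
    (f : ZMod n → M) : ∑ k ∈ range n, f k = ∑ x, f x :=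
  sum_bij' (fun k _ ↦ k) (fun x _ ↦ x.val) (by simp) (fun x _ ↦ by simpa using ZMod.val_lt x)
    (fun k hk ↦ ZMod.val_cast_of_lt (mem_range.1 hk)) (fun x _ ↦ ZMod.natCast_zmod_val x)
    (fun _ _ ↦ rfl)

lemma ZMod.sum_Icc_inv_natCast_eq_zero {p : ℕ} [Fact p.Prime] (hp2 : p ≠ 2) :
    ∑ k ∈ Icc 1 (p - 1), (k : ZMod p)⁻¹ = 0 := by
  have hp := (Fact.out : p.Prime)
  calc ∑ k ∈ Icc 1 (p - 1), (k : ZMod p)⁻¹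
      = ∑ k ∈ range p, (k : ZMod p)⁻¹ := by
        rw [sum_range_eq_add_Ico _ hp.pos, Nat.cast_zero, inv_zero, zero_add]
        rfl
    _ = ∑ x : ZMod p, x⁻¹ := ZMod.sum_range_natCast_eq_sum_univ p _
    _ = ∑ x : ZMod p, x ^ 1 := by simpa using Equiv.sum_comp (Equiv.inv (ZMod p)) (fun x ↦ x)
    _ = 0 := FiniteField.sum_pow_lt_card_sub_one _ 1 (by
        have := hp.two_le; rw [ZMod.card]; omega)

lemma Rat.den_dvd_of_eq_div {q : ℚ} {a b : ℤ} (hq : q = (a : ℚ) / b) :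
    (q.den : ℤ) ∣ b := by
  rw [hq, ← Rat.divInt_eq_div]
  exact Rat.den_dvd a b

lemma Rat.dvd_num_of_eq_div {p : ℤ} (hp : Prime p) {q : ℚ} {a b : ℤ} (hq : q = (a : ℚ) / b)
    (ha : p ∣ a) (hb : ¬ p ∣ b) : p ∣ q.num := by
  have hb0 : b ≠ 0 := by rintro rfl; exact hb (dvd_zero p)
  have hnum : q.num * b = a * q.den := by
    have : (q.num : ℚ) * b = a * q.den := by
      rw [← Rat.mul_den_eq_num, hq]; field_simp
    exact_mod_cast this
  have : p ∣ q.num * b := hnum ▸ ha.mul_right _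
  exact (hp.dvd_or_dvd this).resolve_right hb

lemma prime_not_dvd_harmonicNum_den {p : ℕ} (hp : p.Prime) :
    ¬ p ∣ (harmonicNum (p - 1)).den := fun h ↦ by
  have hden : (harmonicNum (p - 1)).den ∣ (p - 1)! :=
    Int.natCast_dvd_natCast.1 (Rat.den_dvd_of_eq_div (harmonicNum_eq_div_factorial _))
  have := hp.dvd_factorial.1 (h.trans hden)
  have := hp.pos
  omega

lemma prime_dvd_harmonicNum_num {p : ℕ} (hp : p.Prime) (hp2 : p ≠ 2) :
    (p : ℤ) ∣ (harmonicNum (p - 1)).num := by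
  have := Fact.mk hp
  have hcast : ∀ k ∈ Icc 1 (p - 1), (k : ZMod p) ≠ 0 := fun k hk ↦ by
    rw [mem_Icc] at hk
    rw [Ne, ZMod.natCast_eq_zero_iff]
    exact Nat.not_dvd_of_pos_of_lt hk.1 (by omega)
  have hsum : p ∣ ∑ k ∈ Icc 1 (p - 1), (p - 1)! / k := by
    rw [← ZMod.natCast_eq_zero_iff, natCast_sum_factorial_div _ hcast,
      ZMod.sum_Icc_inv_natCast_eq_zero hp2, mul_zero]
  refine Rat.dvd_num_of_eq_div (Nat.prime_iff_prime_int.1 hp) (harmonicNum_eq_div_factorial _)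
    (Int.natCast_dvd_natCast.2 hsum) ?_
  rw [Int.natCast_dvd_natCast, hp.dvd_factorial]
  have := hp.pos
  omega

theorem combined_congr (p : ℕ) (hp : p.Prime) (hp7 : 7 ≤ p) :
    CongrZeroMod p 2
      (4 * (∑ k ∈ Finset.Icc 1 (p - 1), (harmonicNum k) ^ 3 / (k : ℚ))
        - 6 * (∑ k ∈ Finset.Icc 1 (p - 1), (harmonicNum k) ^ 2 / (k : ℚ) ^ 2)
        + 4 * (∑ k ∈ Finset.Icc 1 (p - 1), harmonicNum (k - 1) / (k : ℚ) ^ 3)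
        + 3 * (∑ k ∈ Finset.Icc 1 (p - 1), (1 / (k : ℚ) ^ 4))) := by
  rw [← harmonicNum_pow_four_eq, CongrZeroMod, Rat.num_pow, Rat.den_pow]
  refine ⟨?_, fun h ↦ prime_not_dvd_harmonicNum_den hp (hp.dvd_of_dvd_pow h)⟩
  have hnum := prime_dvd_harmonicNum_num hp (by omega)
  exact (pow_dvd_pow _ (by norm_num)).trans (pow_dvd_pow_of_dvd hnum 4)
end
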